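/- arXiv:2109.11987 — 2 statements merged into one kernel-verified Lean document; each statement's English description precedes it below -/
import Mathlib

section
/- Let Server be a type, log : Server → List ℕ assign to each server its log (where the entry at 1-based position i of log s is the natural-number term of that entry), and committed : Set (ℕ × ℕ) a set of committed log entries given as (index, term) pairs. Assume: (CommittedEntryIndexesAreNonZero) every (i, t) ∈ committed has i ≠ 0; (CommitsAreLogEntries together with CommittedTermMatchesEntry) for every (i, t) ∈ committed there exists a server s with InLog(i, t, s); and (LogsLaterThanCommittedMustHaveCommitted) for every (i, t) ∈ committed and every server s, if some position j of log s (with 1 ≤ j ≤ length of log s) holds an entry whose term is strictly greater than t, then the length of log s is at least i and the entry of log s at position i has term t. Then StateMachineSafety holds: for all (i₁, t₁) ∈ committed and (i₂, t₂) ∈ committed, if i₁ = i₂ then t₁ = t₂. -/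
/-- `InLog i t s`: the log of server `s` contains the entry `(i, t)` at 1-based
position `i`, i.e. `1 ≤ i`, `i ≤ (log s).length`, and the entry of `log s`
at position `i` is `t`. -/
def InLog {Server : Type*} (log : Server → List ℕ) (i t : ℕ) (s : Server) : Prop :=
  1 ≤ i ∧ i ≤ (log s).length ∧ (log s)[i - 1]? = some t

/-- A log holding the committed entry `(i, t₂)` contains a term above `t₁`, so it must also
hold `t₁` at index `i`; hence `t₁ < t₂` is impossible. -/
theorem le_of_mem_committed_of_mem_committed
    {Server : Type*} {log : Server → List ℕ} {committed : Set (ℕ × ℕ)}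
    (hCommitsAreLogEntries : ∀ i t, (i, t) ∈ committed → ∃ s, InLog log i t s)
    (hLogsLaterThanCommittedMustHaveCommitted :
      ∀ i t, (i, t) ∈ committed → ∀ s,
        (∃ j, 1 ≤ j ∧ j ≤ (log s).length ∧
          ∃ u, (log s)[j - 1]? = some u ∧ u > t) →
        (log s).length ≥ i ∧ (log s)[i - 1]? = some t)
    {i t₁ t₂ : ℕ} (h₁ : (i, t₁) ∈ committed) (h₂ : (i, t₂) ∈ committed) : t₂ ≤ t₁ := by
  by_contra! hlt
  obtain ⟨s, hi, hlen, hget₂⟩ := hCommitsAreLogEntries i t₂ h₂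
  have hget₁ := (hLogsLaterThanCommittedMustHaveCommitted i t₁ h₁ s
    ⟨i, hi, hlen, t₂, hget₂, hlt⟩).2
  rw [hget₁] at hget₂
  exact hlt.ne (Option.some_injective _ hget₂)

theorem state_machine_safety_general
    {Server : Type*} (log : Server → List ℕ) (committed : Set (ℕ × ℕ))
    (hCommitsAreLogEntries : ∀ i t, (i, t) ∈ committed → ∃ s, InLog log i t s)
    (hLogsLaterThanCommittedMustHaveCommitted :
      ∀ i t, (i, t) ∈ committed → ∀ s,
        (∃ j, 1 ≤ j ∧ j ≤ (log s).length ∧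
          ∃ u, (log s)[j - 1]? = some u ∧ u > t) →
        (log s).length ≥ i ∧ (log s)[i - 1]? = some t) :
    ∀ i₁ t₁ i₂ t₂, (i₁, t₁) ∈ committed → (i₂, t₂) ∈ committed →
      i₁ = i₂ → t₁ = t₂ := by
  rintro i t₁ _ t₂ h₁ h₂ rfl
  exact le_antisymm
    (le_of_mem_committed_of_mem_committed hCommitsAreLogEntries
      hLogsLaterThanCommittedMustHaveCommitted h₂ h₁)
    (le_of_mem_committed_of_mem_committed hCommitsAreLogEntries
      hLogsLaterThanCommittedMustHaveCommitted h₁ h₂)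

/-- StateMachineSafety: any two committed entries at the same index have the
same term. -/
theorem state_machine_safety
    {Server : Type*} (log : Server → List ℕ) (committed : Set (ℕ × ℕ))
    (hNonZero : ∀ i t, (i, t) ∈ committed → i ≠ 0)
    (hCommitsAreLogEntries : ∀ i t, (i, t) ∈ committed → ∃ s, InLog log i t s)
    (hLogsLaterThanCommittedMustHaveCommitted :
      ∀ i t, (i, t) ∈ committed → ∀ s,
        (∃ j, 1 ≤ j ∧ j ≤ (log s).length ∧
          ∃ u, (log s)[j - 1]? = some u ∧ u > t) →
        (log s).length ≥ i ∧ (log s)[i - 1]? = some t) :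
    ∀ i₁ t₁ i₂ t₂, (i₁, t₁) ∈ committed → (i₂, t₂) ∈ committed →
      i₁ = i₂ → t₁ = t₂ :=
  state_machine_safety_general log committed hCommitsAreLogEntries
    hLogsLaterThanCommittedMustHaveCommitted
end

section
/- Let Server be a type, log : Server → List ℕ assign to each server its log (where the entry at 1-based position i of log s is the natural-number term of that entry), and committed : Set (ℕ × ℕ) a set of committed log entries given as (index, term) pairs. Assume: (CommittedEntryIndexesAreNonZero) every (i, t) ∈ committed has i ≠ 0; (CommitsAreLogEntries together with CommittedTermMatchesEntry) for every (i, t) ∈ committed there exists a server s with InLog(i, t, s); and (LogsLaterThanCommittedMustHaveCommitted) for every (i, t) ∈ committed and every server s, if some position j of log s (with 1 ≤ j ≤ length of log s) holds an entry whose term is strictly greater than t, then the length of log s is at least i and the entry of log s at position i has term t. Then there cannot exist (i₁, t₁) ∈ committed and (i₂, t₂) ∈ committed with i₁ = i₂ and t₁ > t₂; i.e., assuming such entries exist yields a contradiction. -/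
theorem no_committed_same_index_greater_term_general
    {Server : Type*} (log : Server → List ℕ) (committed : Set (ℕ × ℕ))
    (hCommitsAreLogEntries : ∀ i t, (i, t) ∈ committed → ∃ s, InLog log i t s)
    (hLogsLaterThanCommittedMustHaveCommitted :
      ∀ i t, (i, t) ∈ committed → ∀ s,
        (∃ j, 1 ≤ j ∧ j ≤ (log s).length ∧
          ∃ u, (log s)[j - 1]? = some u ∧ u > t) →
        (log s).length ≥ i ∧ (log s)[i - 1]? = some t) :
    ¬ ∃ i₁ t₁ i₂ t₂, (i₁, t₁) ∈ committed ∧ (i₂, t₂) ∈ committed ∧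
        i₁ = i₂ ∧ t₁ > t₂ := by
  rintro ⟨i, t₁, _, t₂, h₁, h₂, rfl, hgt⟩
  obtain ⟨s, hi_pos, hi_le, hs_t₁⟩ := hCommitsAreLogEntries i t₁ h₁
  -- the entry `t₁` of `log s` is later than the committed `(i, t₂)`, so `log s` holds `t₂` at `i` too
  obtain ⟨-, hs_t₂⟩ := hLogsLaterThanCommittedMustHaveCommitted i t₂ h₂ s
    ⟨i, hi_pos, hi_le, t₁, hs_t₁, hgt⟩
  exact hgt.ne' (Option.some_injective _ (hs_t₁.symm.trans hs_t₂))

/-- There cannot exist two committed entries at the same index whose terms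
satisfy `t₁ > t₂`. -/
theorem no_committed_same_index_greater_term
    {Server : Type*} (log : Server → List ℕ) (committed : Set (ℕ × ℕ))
    (hNonZero : ∀ i t, (i, t) ∈ committed → i ≠ 0)
    (hCommitsAreLogEntries : ∀ i t, (i, t) ∈ committed → ∃ s, InLog log i t s)
    (hLogsLaterThanCommittedMustHaveCommitted :
      ∀ i t, (i, t) ∈ committed → ∀ s,
        (∃ j, 1 ≤ j ∧ j ≤ (log s).length ∧
          ∃ u, (log s)[j - 1]? = some u ∧ u > t) →
        (log s).length ≥ i ∧ (log s)[i - 1]? = some t) :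
    ¬ ∃ i₁ t₁ i₂ t₂, (i₁, t₁) ∈ committed ∧ (i₂, t₂) ∈ committed ∧
        i₁ = i₂ ∧ t₁ > t₂ :=
  no_committed_same_index_greater_term_general log committed hCommitsAreLogEntries
    hLogsLaterThanCommittedMustHaveCommitted
end
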